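/- With the data of K(8n,σ,τ) with η(a,b) = -1, if α, β ∈ k^× satisfy β²/α² = τ(b,b)/τ(b,a)², then for all i ≥ 0: (τ(b,a)β / (τ(b,a^{2i})α))² = σ(a^{2i}) / σ(a^{2i}b). -/

import Mathlib

/-- The group `G = Z_{2n} × Z_2`, written additively. -/
abbrev GK (n : ℕ) := ZMod (2 * n) × ZMod 2

/-- The generator `a` of order `2n`. -/
def aK (n : ℕ) : GK n := (1, 0)

/-- The generator `b` of order `2`. -/
def bK (n : ℕ) : GK n := (0, 1)

/-- The order-2 automorphism `◁x` of `G` determined by `a ↦ ab`, `b ↦ b`. -/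
def xK (n : ℕ) : GK n → GK n :=
  fun g => (g.1, g.2 + ZMod.castHom (dvd_mul_right 2 n) (ZMod 2) g.1)

/-!
The automorphism `◁x` fixes `b` and `a^{2i}` and sends `a` to `ab`, and `σ` is `◁x`-invariant.
Hence the compatibility of `σ` and `τ` at `(b, a)`, combined with the cocycle identity at
`(b, b, a)`, gives `τ(b,b) = σ(b)⁻¹`, while at `(b, a^{2i})` it gives
`σ(a^{2i}b) / (σ(b) σ(a^{2i})) = τ(b,a^{2i})²`. Substituting both into
`β²/α² = τ(b,b)/τ(b,a)²` yields the claim.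
-/

section TwistedCocycle

variable {G M : Type*} [AddMonoid G]

theorem cocycle_self_eq_mul_of_add_self_eq_zero [Monoid M] {τ : G → G → M}
    (hcoc : ∀ g h l : G, τ g h * τ (g + h) l = τ h l * τ g (h + l))
    (hτ0 : ∀ g : G, τ 0 g = 1) {b : G} (hb : b + b = 0) (a : G) :
    τ b b = τ b a * τ b (b + a) := by
  simpa only [hb, hτ0, mul_one] using hcoc b b a

variable [CommGroup M] {τ : G → G → M} {σ : G → M} {x : G → G}

theorem inv_apply_eq_mul_of_apply_eq_add
    (hcompat : ∀ g h : G, σ (g + h) * (σ g)⁻¹ * (σ h)⁻¹ = τ g h * τ (x g) (x h))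
    (hσx : ∀ g : G, σ (x g) = σ g) {a b : G} (hxb : x b = b) (hxa : x a = b + a) :
    (σ b)⁻¹ = τ b a * τ b (b + a) := by
  have hσ : σ (b + a) = σ a := by rw [← hxa, hσx]
  simpa only [hxb, hxa, hσ, mul_inv_cancel_comm] using hcompat b a

theorem cocycle_self_eq_inv
    (hcoc : ∀ g h l : G, τ g h * τ (g + h) l = τ h l * τ g (h + l))
    (hτ0 : ∀ g : G, τ 0 g = 1)
    (hcompat : ∀ g h : G, σ (g + h) * (σ g)⁻¹ * (σ h)⁻¹ = τ g h * τ (x g) (x h))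
    (hσx : ∀ g : G, σ (x g) = σ g) {a b : G} (hb : b + b = 0) (hxb : x b = b)
    (hxa : x a = b + a) :
    τ b b = (σ b)⁻¹ := by
  rw [cocycle_self_eq_mul_of_add_self_eq_zero hcoc hτ0 hb a,
    inv_apply_eq_mul_of_apply_eq_add hcompat hσx hxb hxa]

theorem mul_inv_mul_inv_eq_sq_of_apply_eq_self
    (hcompat : ∀ g h : G, σ (g + h) * (σ g)⁻¹ * (σ h)⁻¹ = τ g h * τ (x g) (x h))
    {g h : G} (hg : x g = g) (hh : x h = h) :
    σ (g + h) * (σ g)⁻¹ * (σ h)⁻¹ = τ g h ^ 2 := by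
  rw [hcompat, hg, hh, sq]

end TwistedCocycle

section GK

variable (n : ℕ)

theorem bK_add_bK : bK n + bK n = 0 := by
  simp only [bK, Prod.mk_add_mk, add_zero, Prod.mk_eq_zero, true_and]
  decide

theorem xK_bK : xK n (bK n) = bK n := by
  simp [xK, bK]

theorem xK_aK : xK n (aK n) = bK n + aK n := by
  simp [xK, aK, bK]

theorem xK_two_mul_nsmul_aK (i : ℕ) : xK n ((2 * i) • aK n) = (2 * i) • aK n := by
  have h : (2 * i) • aK n = (((2 * i : ℕ) : ZMod (2 * n)), 0) := by simp [aK, Prod.smul_def]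
  rw [h, xK, map_natCast, zero_add, (ZMod.natCast_eq_zero_iff _ _).mpr ⟨i, rfl⟩]

end GK

theorem tau_sigma_square_relation_general {k : Type*} [Field k] (n : ℕ)
    (τ : GK n → GK n → kˣ) (σ : GK n → kˣ) (α β : kˣ)
    (hcoc : ∀ g h l : GK n, τ g h * τ (g + h) l = τ h l * τ g (h + l))
    (hτ1' : ∀ g : GK n, τ 0 g = 1)
    (hσx : ∀ g : GK n, σ (xK n g) = σ g)
    (hcompat : ∀ g h : GK n,
      σ (g + h) * (σ g)⁻¹ * (σ h)⁻¹ = τ g h * τ (xK n g) (xK n h))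
    (hαβ : β ^ 2 * (α ^ 2)⁻¹ = τ (bK n) (bK n) * (τ (bK n) (aK n) ^ 2)⁻¹) :
    ∀ i : ℕ,
      (τ (bK n) (aK n) * β * (τ (bK n) ((2 * i) • aK n) * α)⁻¹) ^ 2 =
        σ ((2 * i) • aK n) * (σ ((2 * i) • aK n + bK n))⁻¹ := by
  intro i
  set a := aK n
  set b := bK n
  set c := (2 * i) • aK n
  have hbb : τ b b = (σ b)⁻¹ :=
    cocycle_self_eq_inv hcoc hτ1' hcompat hσx (bK_add_bK n) (xK_bK n) (xK_aK n)
  have hbc : σ (b + c) * (σ b)⁻¹ * (σ c)⁻¹ = τ b c ^ 2 :=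
    mul_inv_mul_inv_eq_sq_of_apply_eq_self hcompat (xK_bK n) (xK_two_mul_nsmul_aK n i)
  calc (τ b a * β * (τ b c * α)⁻¹) ^ 2
      = τ b a ^ 2 * (β ^ 2 * (α ^ 2)⁻¹) * (τ b c ^ 2)⁻¹ := by
        simp only [mul_pow, mul_inv, inv_pow]; ac_rfl
    _ = (σ b)⁻¹ * (σ (b + c) * (σ b)⁻¹ * (σ c)⁻¹)⁻¹ := by
        rw [hαβ, hbb, hbc, mul_inv_cancel_comm_assoc]
    _ = σ c * (σ (c + b))⁻¹ := by
        rw [add_comm]; simp only [mul_inv_rev, inv_inv, mul_left_comm (σ c), inv_mul_cancel_left]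

/-- With the data of `K(8n,σ,τ)`, if `α, β ∈ kˣ` satisfy `β²/α² = τ(b,b)/τ(b,a)²`,
then for all `i ≥ 0`: `(τ(b,a)β / (τ(b,a^{2i})α))² = σ(a^{2i}) / σ(a^{2i}b)`. -/
theorem tau_sigma_square_relation {k : Type*} [Field k] (n : ℕ) (hn : 0 < n)
    (τ : GK n → GK n → kˣ) (σ : GK n → kˣ) (α β : kˣ)
    (hcoc : ∀ g h l : GK n, τ g h * τ (g + h) l = τ h l * τ g (h + l))
    (hτ1 : ∀ g : GK n, τ g 0 = 1) (hτ1' : ∀ g : GK n, τ 0 g = 1)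
    (hσ1 : σ 0 = 1) (hσx : ∀ g : GK n, σ (xK n g) = σ g)
    (hcompat : ∀ g h : GK n,
      σ (g + h) * (σ g)⁻¹ * (σ h)⁻¹ = τ g h * τ (xK n g) (xK n h))
    (hαβ : β ^ 2 * (α ^ 2)⁻¹ = τ (bK n) (bK n) * (τ (bK n) (aK n) ^ 2)⁻¹) :
    ∀ i : ℕ,
      (τ (bK n) (aK n) * β * (τ (bK n) ((2 * i) • aK n) * α)⁻¹) ^ 2 =
        σ ((2 * i) • aK n) * (σ ((2 * i) • aK n + bK n))⁻¹ :=
  tau_sigma_square_relation_general n τ σ α β hcoc hτ1' hσx hcompat hαβ
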